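/- Let α > −1 and R > 0. For every n ≥ 0 the polynomial L^α_{n+1}(x) + x_{n+1}·L^α_n(x) + y_n·L^α_{n−1}(x) is divisible by x, and its quotient p_n (the n-th extended Krall–Laguerre polynomial) satisfies the fourth-order differential equation x²·p_n''''(x) − 2x(x−α−2)·p_n'''(x) + (x(x − 2(R+α) − 6) + α(α+3))·p_n''(x) + 2((R+1)x − (α+1)R − α)·p_n'(x) + R(R+1)·p_n(x) = (R+n)(R+n+1)·p_n(x). -/
import Mathlib

open Polynomial

/-- Monic Laguerre polynomials: `L_{-1} = 0`, `L_0 = 1`,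
`L_n(x) = (x − (2n−1+α))·L_{n−1}(x) − (n−1)(n−1+α)·L_{n−2}(x)`. -/
noncomputable def Lag (α : ℝ) : ℕ → ℝ[X]
  | 0 => 1
  | 1 => X - C (1 + α)
  | (n + 2) => (X - C (2 * ((n : ℝ) + 2) - 1 + α)) * Lag α (n + 1)
      - C (((n : ℝ) + 1) * (((n : ℝ) + 1) + α)) * Lag α n

/-- `x_n = α + (2n² + 2(R−1)n − R)/((n−1)+R)`. -/
noncomputable def xKL (α R : ℝ) (n : ℕ) : ℝ :=
  α + (2 * (n : ℝ) ^ 2 + 2 * (R - 1) * (n : ℝ) - R) / (((n : ℝ) - 1) + R)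

/-- `y_n = n(n+α)(n+1+R)/(n+R)`. -/
noncomputable def yKL (α R : ℝ) (n : ℕ) : ℝ :=
  (n : ℝ) * ((n : ℝ) + α) * ((n : ℝ) + 1 + R) / ((n : ℝ) + R)

lemma lag_rec (α : ℝ) (n : ℕ) : Lag α (n+2) = (X - C (2 * ((n : ℝ) + 2) - 1 + α)) * Lag α (n + 1)
      - C (((n : ℝ) + 1) * (((n : ℝ) + 1) + α)) * Lag α n := rfl

lemma lag_facts (α : ℝ) (n : ℕ) :
    (X * derivative (derivative (Lag α n)) + (C (α+1) - X) * derivative (Lag α n)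
        = C (-(n:ℝ)) * Lag α n) ∧
    (X * derivative (Lag α (n+1))
        = C ((n:ℝ)+1) * Lag α (n+1) + C (((n:ℝ)+1)*(((n:ℝ)+1)+α)) * Lag α n) := by
  induction n using Nat.strong_induction_on with
  | _ n ih =>
    match n with
    | 0 =>
      refine ⟨by simp [Lag], by simp [Lag]⟩
    | 1 =>
      constructor
      · simp only [Lag]
        simp [derivative_sub, derivative_X, derivative_one]
        ring
      · rw [lag_rec α 0]
        simp only [Lag, Nat.cast_zero, Nat.cast_one, zero_add]
        simp only [map_add, map_mul, map_sub, map_one, map_ofNat, derivative_sub,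
          derivative_add, derivative_mul, derivative_X, derivative_C, derivative_one,
          derivative_ofNat]
        ring
    | (m+2) =>
      obtain ⟨eB, hB⟩ := ih (m+1) (by omega)
      obtain ⟨eD, hD⟩ := ih m (by omega)
      have recm := lag_rec α m
      have recm1 := lag_rec α (m+1)
      simp only [Nat.cast_add, Nat.cast_one, Nat.cast_ofNat, map_add, map_sub, map_mul,
        map_neg, map_one, map_ofNat] at eB hB eD hD recm recm1 ⊢
      have drec : derivative (Lag α (m+2))
          = Lag α (m+1) + (X - (2 * (C (m:ℝ) + 2) - 1 + C α)) * derivative (Lag α (m + 1))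
            - (C (m:ℝ) + 1) * ((C (m:ℝ) + 1) + C α) * derivative (Lag α m) := by
        rw [recm]
        simp only [derivative_sub, derivative_add, derivative_mul, derivative_X, derivative_C,
          derivative_one, derivative_ofNat]
        ring
      have ddrec : derivative (derivative (Lag α (m+2)))
          = 2 * derivative (Lag α (m+1))
            + (X - (2 * (C (m:ℝ) + 2) - 1 + C α)) * derivative (derivative (Lag α (m + 1)))
            - (C (m:ℝ) + 1) * ((C (m:ℝ) + 1) + C α) * derivative (derivative (Lag α m)) := by
        rw [drec]
        simp only [derivative_sub, derivative_add, derivative_mul, derivative_X, derivative_C,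
          derivative_one, derivative_ofNat]
        ring
      have drec3 : derivative (Lag α (m+3))
          = Lag α (m+2) + (X - (2 * (C (m:ℝ) + 1 + 2) - 1 + C α)) * derivative (Lag α (m + 2))
            - (C (m:ℝ) + 1 + 1) * ((C (m:ℝ) + 1 + 1) + C α) * derivative (Lag α (m+1)) := by
        have h0 : Lag α (m+3) = Lag α (m+1+2) := rfl
        rw [h0, recm1]
        simp only [derivative_sub, derivative_add, derivative_mul, derivative_X, derivative_C,
          derivative_one, derivative_ofNat]
        ring
      constructor
      · rw [ddrec, drec, recm]
        linear_combination (X - (2 * (C (m:ℝ) + 2) - 1 + C α)) * eB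
          - ((C (m:ℝ) + 1) * ((C (m:ℝ) + 1) + C α)) * eD + 2 * hD
      · have h3 : Lag α (m+1+1) = Lag α (m+2) := rfl
        rw [h3] at hB
        rw [drec3]
        rw [show Lag α (m+2+1) = Lag α (m+1+2) from rfl, recm1, h3]
        linear_combination (X - (2 * (C (m:ℝ) + 3) - 1 + C α)) * hB
          - ((C (m:ℝ) + 2) * ((C (m:ℝ) + 2) + C α)) * hD
          - ((C (m:ℝ) + 2) * ((C (m:ℝ) + 2) + C α)) * recm

noncomputable def ellP (α R : ℝ) (q : ℝ[X]) : ℝ[X] :=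
  -(X * derivative (derivative q)) + (X - C α) * derivative q + C R * q

noncomputable def ellQ (α R : ℝ) (q : ℝ[X]) : ℝ[X] :=
  -(X * derivative (derivative q)) + (X - C (α+2)) * derivative q + C (R+1) * q

lemma PQT (α R : ℝ) (q : ℝ[X]) :
    X ^ 2 * derivative^[4] q
        - 2 * X * (X - C (α + 2)) * derivative^[3] q
        + (X * (X - C (2 * (R + α) + 6)) + C (α * (α + 3))) * derivative^[2] q
        + 2 * (C (R + 1) * X - C ((α + 1) * R + α)) * derivative q
        + C (R * (R + 1)) * q
      = ellP α R (ellQ α R q) := by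
  simp only [ellP, ellQ, Function.iterate_succ, Function.iterate_zero, Function.comp_apply,
    id_eq, derivative_add, derivative_sub, derivative_neg, derivative_mul, derivative_X,
    derivative_C, derivative_one, derivative_zero, derivative_ofNat, map_add, map_sub,
    map_mul, map_one, map_ofNat, one_mul, mul_one]
  ring

lemma ellP_lag (α R : ℝ) (n : ℕ) :
    ellP α R (Lag α n) = C ((n:ℝ)+R) * Lag α n + derivative (Lag α n) := by
  have e := (lag_facts α n).1
  unfold ellP
  simp only [map_add, map_neg, map_one, map_ofNat] at e ⊢
  linear_combination -e

lemma ellQ_lag (α R : ℝ) (n : ℕ) :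
    ellQ α R (Lag α n) = C ((n:ℝ)+R+1) * Lag α n - derivative (Lag α n) := by
  have e := (lag_facts α n).1
  unfold ellQ
  simp only [map_add, map_neg, map_one, map_ofNat] at e ⊢
  linear_combination -e

lemma ellQ_dlag (α R : ℝ) (n : ℕ) :
    ellQ α R (derivative (Lag α n)) = C ((n:ℝ)+R) * derivative (Lag α n) := by
  have e := congrArg derivative (lag_facts α n).1
  unfold ellQ
  simp only [derivative_add, derivative_sub, derivative_mul, derivative_X, derivative_C,
    derivative_C_mul, derivative_one, derivative_zero, map_add, map_neg, map_one, map_ofNat,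
    one_mul] at e ⊢
  linear_combination -e

lemma ellQ_comb (α R a : ℝ) (f g : ℝ[X]) :
    ellQ α R (C a * f + g) = C a * ellQ α R f + ellQ α R g := by
  unfold ellQ
  simp only [derivative_add, derivative_C_mul]
  ring

lemma ellQ_Cmul (α R a : ℝ) (f : ℝ[X]) :
    ellQ α R (C a * f) = C a * ellQ α R f := by
  unfold ellQ
  simp only [derivative_C_mul]
  ring

lemma ellP_Cmul (α R a : ℝ) (f : ℝ[X]) :
    ellP α R (C a * f) = C a * ellP α R f := by
  unfold ellP
  simp only [derivative_C_mul]
  ring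

theorem stmt8 (α R : ℝ) (hα : -1 < α) (hR : 0 < R) (n : ℕ) :
    ∃ p : ℝ[X],
      X * p = Lag α (n + 1) + C (xKL α R (n + 1)) * Lag α n
          + C (yKL α R n) * (if n = 0 then 0 else Lag α (n - 1)) ∧
      X ^ 2 * derivative^[4] p
        - 2 * X * (X - C (α + 2)) * derivative^[3] p
        + (X * (X - C (2 * (R + α) + 6)) + C (α * (α + 3))) * derivative^[2] p
        + 2 * (C (R + 1) * X - C ((α + 1) * R + α)) * derivative p
        + C (R * (R + 1)) * p
      = C ((R + n) * (R + n + 1)) * p := by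
  have hnR : (n:ℝ) + R ≠ 0 := by positivity
  refine ⟨Lag α n + C (((n:ℝ)+R)⁻¹) * derivative (Lag α n), ?_, ?_⟩
  · -- divisibility claim
    rcases n with _ | m
    · have hx : xKL α R 1 = 1 + α := by
        unfold xKL
        push_cast
        rw [show (1:ℝ)-1+R = R by ring]
        field_simp
        ring
      have hy : yKL α R 0 = 0 := by simp [yKL]
      simp only [Nat.cast_zero, zero_add, if_pos rfl, hx, hy, map_zero, zero_mul, mul_zero,
        add_zero]
      simp [Lag]
    · have hden : (m:ℝ)+1+R ≠ 0 := by positivity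
      have hx : xKL α R (m+1+1) = 2*(m:ℝ)+3+α + ((m:ℝ)+1) * ((m:ℝ)+1+R)⁻¹ := by
        unfold xKL
        push_cast
        rw [show (m:ℝ)+1+1-1+R = (m:ℝ)+1+R by ring]
        field_simp
        ring
      have hy : yKL α R (m+1) = ((m:ℝ)+1)*(((m:ℝ)+1)+α) * (1 + ((m:ℝ)+1+R)⁻¹) := by
        unfold yKL
        push_cast
        rw [div_eq_iff hden]
        have h1 : (1 + ((m:ℝ)+1+R)⁻¹) * ((m:ℝ)+1+R) = (m:ℝ)+1+R+1 := by
          rw [add_mul, one_mul, inv_mul_cancel₀ hden]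
        linear_combination (-(((m:ℝ)+1)*(((m:ℝ)+1)+α))) * h1
      have hD := (lag_facts α m).2
      have recm := lag_rec α m
      rw [hx, hy, if_neg (Nat.succ_ne_zero m)]
      simp only [Nat.add_sub_cancel, Nat.cast_add, Nat.cast_one,
        map_add, map_mul, map_sub, map_one, map_ofNat] at hD recm ⊢
      linear_combination (-1 : ℝ[X]) * recm + C (((m:ℝ)+1+R)⁻¹) * hD
  · -- the differential equation
    have hp : Lag α n + C (((n:ℝ)+R)⁻¹) * derivative (Lag α n)
        = C (((n:ℝ)+R)⁻¹) * (C ((n:ℝ)+R) * Lag α n + derivative (Lag α n)) := by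
      rw [mul_add, ← mul_assoc, ← C_mul, inv_mul_cancel₀ hnR, C_1, one_mul]
    rw [hp, PQT, ellQ_Cmul, ellQ_comb, ellQ_lag, ellQ_dlag]
    have hmid : C ((n:ℝ)+R) * (C ((n:ℝ)+R+1) * Lag α n - derivative (Lag α n))
        + C ((n:ℝ)+R) * derivative (Lag α n)
        = C ((R+(n:ℝ)) * (R+(n:ℝ)+1)) * Lag α n := by
      rw [show (R+(n:ℝ)) * (R+(n:ℝ)+1) = ((n:ℝ)+R)*((n:ℝ)+R+1) by ring, C_mul]
      ring
    rw [hmid, ellP_Cmul, ellP_Cmul, ellP_lag]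
    ring
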